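/- arXiv:0903.0091 — 4 statements merged into one kernel-verified Lean document; each statement's English description precedes it below -/
import Mathlib

section
/- In the homotopy category K(B) of complexes over an additive category B, the pair consisting of (the Karoubi-closure of) complexes homotopy equivalent to ones concentrated in non-positive degrees and complexes homotopy equivalent to ones concentrated in non-negative degrees forms a weight structure, with weight decompositions given by stupid truncations of complexes. -/
/-!
The stupid truncation `σ_{≥1} K → K → σ_{≤0} K` is split in each degree, so it yields a
distinguished triangle in `K(B)`; rotated, this is a weight decomposition of `K`.
Orthogonality holds because a chain map from a complex concentrated in degrees `≥ 0` to one
concentrated in degrees `≤ -1` vanishes in every degree. Retracts, finite sums and shifts of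
such complexes are handled on representatives and then passed to the Karoubi closures.
-/

open CategoryTheory CategoryTheory.Limits CategoryTheory.Pretriangulated CategoryTheory.Category

universe v u

section WS

variable (C : Type u) [Category.{v} C] [Preadditive C] [HasZeroObject C] [HasShift C ℤ]
  [∀ n : ℤ, (CategoryTheory.shiftFunctor C n).Additive] [Pretriangulated C]

/-- A weight structure on a pretriangulated category, following Bondarko.
`LE` is the class `C^{w≤0}` and `GE` is the class `C^{w≥0}`. -/
structure WeightStructure where
  /-- the class `C^{w≤0}` -/
  LE : C → Prop
  /-- the class `C^{w≥0}` -/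
  GE : C → Prop
  /-- `C^{w≤0}` is Karoubi-closed (closed under retracts) -/
  LE_retract : ∀ ⦃X Y : C⦄ (i : X ⟶ Y) (r : Y ⟶ X), i ≫ r = 𝟙 X → LE Y → LE X
  /-- `C^{w≥0}` is Karoubi-closed (closed under retracts) -/
  GE_retract : ∀ ⦃X Y : C⦄ (i : X ⟶ Y) (r : Y ⟶ X), i ≫ r = 𝟙 X → GE Y → GE X
  /-- `C^{w≤0}` is additive (closed under finite direct sums) -/
  LE_add : ∀ (X Y : C), LE X → LE Y → LE (X ⊞ Y)
  /-- `C^{w≥0}` is additive (closed under finite direct sums) -/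
  GE_add : ∀ (X Y : C), GE X → GE Y → GE (X ⊞ Y)
  /-- `C^{w≤0}[1] ⊆ C^{w≤0}` -/
  LE_shift : ∀ (X : C), LE X → LE (X⟦(1:ℤ)⟧)
  /-- `C^{w≥0} ⊆ C^{w≥0}[1]` -/
  GE_shift : ∀ (X : C), GE X → GE (X⟦(-1:ℤ)⟧)
  /-- orthogonality: `Hom(X, Y) = 0` for `X ∈ C^{w≥0}` and `Y ∈ C^{w≤0}[1]` -/
  orthogonality : ∀ ⦃X Y : C⦄ (f : X ⟶ Y⟦(1:ℤ)⟧), GE X → LE Y → f = 0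
  /-- weight decompositions: every `X` sits in a distinguished triangle
  `B[-1] → X → A → B` (equivalently `X → A → B → X[1]`) with `A ∈ C^{w≤0}`, `B ∈ C^{w≥0}` -/
  weight_decomposition : ∀ (X : C), ∃ (A B : C) (_ : LE A) (_ : GE B)
    (a : X ⟶ A) (f : A ⟶ B) (g : B ⟶ X⟦(1:ℤ)⟧), Triangle.mk a f g ∈ distTriang C

end WS

section KB

variable (B : Type u) [Category.{v} B] [Preadditive B] [HasZeroObject B] [HasBinaryBiproducts B]

/-- objects of `K(B)` that are homotopy equivalent to (i.e. isomorphic in `K(B)` to the image of)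
a complex concentrated in non-positive degrees -/
def concentratedNonpos (X : HomotopyCategory B (ComplexShape.up ℤ)) : Prop :=
  ∃ (Y : CochainComplex B ℤ), (∀ n : ℤ, 0 < n → IsZero (Y.X n)) ∧
    Nonempty (((HomotopyCategory.quotient B (ComplexShape.up ℤ)).obj Y) ≅ X)

/-- objects of `K(B)` that are homotopy equivalent to a complex concentrated in
non-negative degrees -/
def concentratedNonneg (X : HomotopyCategory B (ComplexShape.up ℤ)) : Prop :=
  ∃ (Y : CochainComplex B ℤ), (∀ n : ℤ, n < 0 → IsZero (Y.X n)) ∧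
    Nonempty (((HomotopyCategory.quotient B (ComplexShape.up ℤ)).obj Y) ≅ X)

/-- the Karoubi-closure (closure under retracts) of a class of objects -/
def karoubiClosure {D : Type*} [Category D] (S : D → Prop) (X : D) : Prop :=
  ∃ (Y : D) (_ : S Y) (i : X ⟶ Y) (r : Y ⟶ X), i ≫ r = 𝟙 X

namespace karoubiClosure

variable {D : Type*} [Category* D] {S : D → Prop}

lemma of_mem {X : D} (hX : S X) : karoubiClosure S X :=
  ⟨X, hX, 𝟙 X, 𝟙 X, comp_id _⟩

lemma of_retract {X Y : D} (i : X ⟶ Y) (r : Y ⟶ X) (hir : i ≫ r = 𝟙 X)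
    (hY : karoubiClosure S Y) : karoubiClosure S X := by
  obtain ⟨Z, hZ, i', r', h⟩ := hY
  exact ⟨Z, hZ, i ≫ i', r' ≫ r, by rw [assoc, reassoc_of% h, hir]⟩

lemma map {D' : Type*} [Category* D'] {S' : D' → Prop} (F : D ⥤ D')
    (hF : ∀ X, S X → S' (F.obj X)) {X : D} (hX : karoubiClosure S X) :
    karoubiClosure S' (F.obj X) := by
  obtain ⟨Z, hZ, i, r, h⟩ := hX
  exact ⟨F.obj Z, hF Z hZ, F.map i, F.map r, by rw [← F.map_comp, h, F.map_id]⟩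

lemma biprod [HasZeroMorphisms D] [HasBinaryBiproducts D]
    (hS : ∀ X Y, S X → S Y → S (X ⊞ Y)) {X Y : D}
    (hX : karoubiClosure S X) (hY : karoubiClosure S Y) : karoubiClosure S (X ⊞ Y) := by
  obtain ⟨Z, hZ, i, r, h⟩ := hX
  obtain ⟨Z', hZ', i', r', h'⟩ := hY
  exact ⟨Z ⊞ Z', hS Z Z' hZ hZ', Limits.biprod.map i i', Limits.biprod.map r r', by
    apply Limits.biprod.hom_ext <;> simp [h, h']⟩

lemma hom_eq_zero [HasZeroMorphisms D] {T : D → Prop}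
    (hST : ∀ ⦃X Y : D⦄, S X → T Y → ∀ f : X ⟶ Y, f = 0) {X Y : D}
    (hX : karoubiClosure S X) (hY : karoubiClosure T Y) (f : X ⟶ Y) : f = 0 := by
  obtain ⟨X', hX', i, r, h⟩ := hX
  obtain ⟨Y', hY', i', r', h'⟩ := hY
  calc f = i ≫ (r ≫ f ≫ i') ≫ r' := by simp [reassoc_of% h, h']
    _ = 0 := by rw [hST hX' hY' (r ≫ f ≫ i'), zero_comp, comp_zero]

end karoubiClosure

namespace HomologicalComplex

open ZeroObject

section

variable {C : Type*} [Category* C] [HasZeroMorphisms C] [HasZeroObject C]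
  {ι : Type*} {c : ComplexShape ι} (K : HomologicalComplex C c)
  (s : ι → Prop) [DecidablePred s]

/-- This is a complex for every `s`, since `d ≫ d` already vanishes in `K`; the comparison maps
with `K` need `s` to be closed upwards (`ιStupidTruncOn`) or downwards (`πStupidTruncOn`). -/
noncomputable def stupidTruncOn : HomologicalComplex C c where
  X n := if s n then K.X n else 0
  d i j := if h : s i ∧ s j then eqToHom (if_pos h.1) ≫ K.d i j ≫ eqToHom (if_pos h.2).symm
    else 0
  shape i j hij := by
    by_cases h : s i ∧ s j
    · rw [dif_pos h, K.shape i j hij, zero_comp, comp_zero]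
    · rw [dif_neg h]
  d_comp_d' i j k _ _ := by
    by_cases hi : s i <;> by_cases hj : s j <;> by_cases hk : s k <;> simp [hi, hj, hk]

lemma isZero_stupidTruncOn_X {n : ι} (hn : ¬ s n) : IsZero ((K.stupidTruncOn s).X n) := by
  simpa [stupidTruncOn, hn] using Limits.isZero_zero C

variable {s}

noncomputable def stupidTruncOnXIso {n : ι} (hn : s n) : (K.stupidTruncOn s).X n ≅ K.X n :=
  eqToIso (if_pos hn)

lemma stupidTruncOn_d {i j : ι} (hi : s i) (hj : s j) :
    (K.stupidTruncOn s).d i j =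
      (K.stupidTruncOnXIso hi).hom ≫ K.d i j ≫ (K.stupidTruncOnXIso hj).inv :=
  dif_pos ⟨hi, hj⟩

noncomputable def ιStupidTruncOn (hs : ∀ i j, c.Rel i j → s i → s j) :
    K.stupidTruncOn s ⟶ K where
  f n := if h : s n then (K.stupidTruncOnXIso h).hom else 0
  comm' i j hij := by
    by_cases hi : s i
    · have hj := hs i j hij hi
      simp [hi, hj, K.stupidTruncOn_d hi hj]
    · exact (K.isZero_stupidTruncOn_X s hi).eq_of_src _ _

lemma isIso_ιStupidTruncOn_f (hs : ∀ i j, c.Rel i j → s i → s j) {n : ι} (hn : s n) :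
    IsIso ((K.ιStupidTruncOn hs).f n) := by
  dsimp [ιStupidTruncOn]
  rw [dif_pos hn]
  infer_instance

noncomputable def πStupidTruncOn (hs : ∀ i j, c.Rel i j → s j → s i) :
    K ⟶ K.stupidTruncOn s where
  f n := if h : s n then (K.stupidTruncOnXIso h).inv else 0
  comm' i j hij := by
    by_cases hj : s j
    · have hi := hs i j hij hj
      simp [hi, hj, K.stupidTruncOn_d hi hj]
    · exact (K.isZero_stupidTruncOn_X s hj).eq_of_tgt _ _

lemma isIso_πStupidTruncOn_f (hs : ∀ i j, c.Rel i j → s j → s i) {n : ι} (hn : s n) :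
    IsIso ((K.πStupidTruncOn hs).f n) := by
  dsimp [πStupidTruncOn]
  rw [dif_pos hn]
  infer_instance

noncomputable def stupidTruncShortComplex (hs : ∀ i j, c.Rel i j → s i → s j) :
    ShortComplex (HomologicalComplex C c) :=
  ShortComplex.mk (K.ιStupidTruncOn hs) (K.πStupidTruncOn (s := (¬ s ·))
    (fun i j hij hj hi => hj (hs i j hij hi))) (by
      ext n
      by_cases h : s n <;> simp [ιStupidTruncOn, πStupidTruncOn, h])

end

section

variable {C : Type*} [Category* C] [Preadditive C] [HasZeroObject C]
  {ι : Type*} {c : ComplexShape ι} (K : HomologicalComplex C c)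
  {s : ι → Prop} [DecidablePred s]

noncomputable def stupidTruncShortComplexSplitting (hs : ∀ i j, c.Rel i j → s i → s j)
    (n : ι) : ((K.stupidTruncShortComplex hs).map (eval C c n)).Splitting :=
  if h : s n then
    .ofIsIsoOfIsZero _ (K.isIso_ιStupidTruncOn_f hs h)
      (K.isZero_stupidTruncOn_X (¬ s ·) (not_not.2 h))
  else
    have hs' : ∀ i j, c.Rel i j → ¬ s j → ¬ s i := fun i j hij hj hi => hj (hs i j hij hi)
    .ofIsZeroOfIsIso _ (K.isZero_stupidTruncOn_X s h) (K.isIso_πStupidTruncOn_f hs' h)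

end

end HomologicalComplex

namespace HomotopyCategory

variable {C : Type*} [Category* C] [Preadditive C]

/-- `concentratedNonpos B` and `concentratedNonneg B` are `VanishesOn (0 < ·)` and
`VanishesOn (· < 0)` by definition. -/
def VanishesOn (p : ℤ → Prop) (X : HomotopyCategory C (ComplexShape.up ℤ)) : Prop :=
  ∃ K : CochainComplex C ℤ, (∀ n, p n → IsZero (K.X n)) ∧
    Nonempty ((quotient C (ComplexShape.up ℤ)).obj K ≅ X)

namespace VanishesOn

variable {p q : ℤ → Prop} {X Y : HomotopyCategory C (ComplexShape.up ℤ)}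

lemma shift (a : ℤ) (hpq : ∀ n, q n → p (n + a)) (hX : VanishesOn p X) :
    VanishesOn q (X⟦a⟧) := by
  obtain ⟨K, hK, ⟨e⟩⟩ := hX
  exact ⟨K⟦a⟧, fun n hn => hK (n + a) (hpq n hn),
    ⟨((quotient C _).commShiftIso a).app K ≪≫ (shiftFunctor _ a).mapIso e⟩⟩

lemma biprod [HasZeroObject C] [HasBinaryBiproducts C] (hX : VanishesOn p X)
    (hY : VanishesOn p Y) : VanishesOn p (X ⊞ Y) := by
  obtain ⟨K, hK, ⟨e⟩⟩ := hX
  obtain ⟨L, hL, ⟨e'⟩⟩ := hY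
  have := preservesBinaryBiproducts_of_preservesBiproducts (quotient C (ComplexShape.up ℤ))
  exact ⟨K ⊞ L, fun n hn => ((biprod_isZero_iff _ _).2 ⟨hK n hn, hL n hn⟩).of_iso
      (HomologicalComplex.biprodXIso K L n),
    ⟨(quotient C _).mapBiprod K L ≪≫ biprod.mapIso e e'⟩⟩

lemma hom_eq_zero (hpq : ∀ n, p n ∨ q n) (hX : VanishesOn p X) (hY : VanishesOn q Y)
    (f : X ⟶ Y) : f = 0 := by
  obtain ⟨K, hK, ⟨e⟩⟩ := hX
  obtain ⟨L, hL, ⟨e'⟩⟩ := hY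
  obtain ⟨φ, hφ⟩ := (quotient C _).map_surjective (e.hom ≫ f ≫ e'.inv)
  have hφ0 : φ = 0 := by
    ext n
    rcases hpq n with hn | hn
    · exact (hK n hn).eq_of_src _ _
    · exact (hL n hn).eq_of_tgt _ _
  calc f = e.inv ≫ (e.hom ≫ f ≫ e'.inv) ≫ e'.hom := by simp
    _ = 0 := by rw [← hφ, hφ0, Functor.map_zero, zero_comp, comp_zero]

end VanishesOn

lemma exists_distinguished_vanishesOn [HasZeroObject C] [HasBinaryBiproducts C] (k : ℤ)
    (X : HomotopyCategory C (ComplexShape.up ℤ)) :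
    ∃ (A B : HomotopyCategory C (ComplexShape.up ℤ)) (_ : VanishesOn (k < ·) A)
      (_ : VanishesOn (· < k) B) (a : X ⟶ A) (f : A ⟶ B) (g : B ⟶ X⟦(1 : ℤ)⟧),
      Triangle.mk a f g ∈ distTriang _ := by
  obtain ⟨K⟩ := X
  have hs : ∀ i j, (ComplexShape.up ℤ).Rel i j → k < i → k < j := by
    rintro i j rfl hi
    omega
  have hT := (distinguished_iff_iso_trianglehOfDegreewiseSplit _).2
    ⟨_, K.stupidTruncShortComplexSplitting hs, ⟨Iso.refl _⟩⟩
  have hA : VanishesOn (k < ·) ((quotient C _).obj (K.stupidTruncOn (¬ k < ·))) :=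
    ⟨_, fun n hn => K.isZero_stupidTruncOn_X _ (not_not.2 hn), ⟨Iso.refl _⟩⟩
  have hB : VanishesOn (· ≤ k) ((quotient C _).obj (K.stupidTruncOn (k < ·))) :=
    ⟨_, fun n hn => K.isZero_stupidTruncOn_X _ (not_lt.2 hn), ⟨Iso.refl _⟩⟩
  exact ⟨_, _, hA, hB.shift 1 fun n hn => by omega, _, _, _, rot_of_distTriang _ hT⟩

end HomotopyCategory

/-- the 'stupid' weight structure on `K(B)`: the Karoubi-closures of the classes
of complexes homotopy equivalent to ones concentrated in non-positive (resp. non-negative)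
degrees form a weight structure on the homotopy category `K(B)`. -/
theorem stupid_weight_structure_on_homotopy_category :
    ∃ w : WeightStructure (HomotopyCategory B (ComplexShape.up ℤ)),
      w.LE = karoubiClosure (concentratedNonpos B) ∧
      w.GE = karoubiClosure (concentratedNonneg B) := by
  open HomotopyCategory in
  refine ⟨{
    LE := karoubiClosure (concentratedNonpos B)
    GE := karoubiClosure (concentratedNonneg B)
    LE_retract := fun _ _ => karoubiClosure.of_retract
    GE_retract := fun _ _ => karoubiClosure.of_retract
    LE_add := fun _ _ => karoubiClosure.biprod fun _ _ => VanishesOn.biprod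
    GE_add := fun _ _ => karoubiClosure.biprod fun _ _ => VanishesOn.biprod
    LE_shift := fun _ => karoubiClosure.map _ fun _ => VanishesOn.shift 1 fun _ _ => by omega
    GE_shift := fun _ => karoubiClosure.map _ fun _ => VanishesOn.shift (-1) fun _ _ => by omega
    orthogonality := fun _ _ f hX hY =>
      karoubiClosure.hom_eq_zero
        (fun _ _ => VanishesOn.hom_eq_zero fun n => lt_or_ge n 0) hX
        (karoubiClosure.map _ (fun _ => VanishesOn.shift 1 fun _ _ => by omega) hY) f
    weight_decomposition := fun X => by
      obtain ⟨A, B, hA, hB, a, f, g, hT⟩ := exists_distinguished_vanishesOn 0 X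
      exact ⟨A, B, .of_mem hA, .of_mem hB, a, f, g, hT⟩ }, rfl, rfl⟩

end KB
end

section
/- Let D be a full additive subcategory of a triangulated category C such that D is negative (Hom(X, Y[i]) = 0 for all X, Y ∈ D and i > 0) and D generates C as a triangulated category. Then there exists a unique weight structure w on C such that D ⊆ C^{w=0}, and its heart is the Karoubi-closure of D in C. -/
/-!
Let `S⁺ = GEClosure S` be the extension closure of the shifts `A⟦n⟧`, `A ∈ S`, `n ≤ 0`.
Negativity of `S` gives `Hom(S⁺, B⟦m⟧) = 0` for `B ∈ S` and `m > 0`, so `C^{w≥0}`, the retracts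
of `S⁺`, and `C^{w≤0} := {Y | Hom(S⁺, Y⟦1⟧) = 0}` are orthogonal. Weight decompositions
`X → P → Q → X⟦1⟧` with `Q ∈ S⁺` exist for the shifts of objects of `S`, and they can be glued
along a distinguished triangle; as `C` is only pretriangulated there is no octahedron, and the
orthogonality of the glued `P` is obtained from the five lemma for `Hom(W, -)` instead. Since `S`
generates `C`, every object has a decomposition. Running the same construction against
`C^{w'≥0}` for any weight structure `w'` with `S` in its heart gives `C^{w≤0} ⊆ C^{w'≤0}`; the
reverse inclusion is orthogonality, so `w' = w`. Finally every `X ∈ S⁺` maps to some `P ∈ S` so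
that each map from `X` to `C^{w≤0}` factors through `X → P`; for `X` in the heart, a retract of
some `W ∈ S⁺`, this exhibits `X` as a retract of `P`.
-/

open CategoryTheory CategoryTheory.Limits CategoryTheory.Pretriangulated CategoryTheory.Category

universe v u

variable (C : Type u) [Category.{v} C] [Preadditive C] [HasZeroObject C] [HasShift C ℤ]
  [∀ n : ℤ, (CategoryTheory.shiftFunctor C n).Additive] [Pretriangulated C]

variable {C}

/-- The class of objects of the heart `C^{w=0} = C^{w≤0} ∩ C^{w≥0}` of a weight structure. -/
def WeightStructure.heart (w : WeightStructure C) (X : C) : Prop := w.LE X ∧ w.GE X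

open Preadditive ZeroObject

section

variable {E : Type*} [Category E] [Preadditive E]

def HomVanishes (W Y : E) : Prop := ∀ f : W ⟶ Y, f = 0

namespace HomVanishes

variable {W W' Y Y' : E}

lemma of_retract_left (h : HomVanishes W Y) (e : Retract W' W) : HomVanishes W' Y := fun f => by
  rw [← id_comp f, ← e.retract, assoc, h (e.r ≫ f), comp_zero]

lemma of_retract_right (h : HomVanishes W Y) (e : Retract Y' Y) : HomVanishes W Y' := fun f => by
  rw [← comp_id f, ← e.retract, ← assoc, h (f ≫ e.i), zero_comp]

lemma of_iso_left (h : HomVanishes W Y) (e : W' ≅ W) : HomVanishes W' Y :=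
  h.of_retract_left (Retract.ofIso e)

lemma of_iso_right (h : HomVanishes W Y) (e : Y' ≅ Y) : HomVanishes W Y' :=
  h.of_retract_right (Retract.ofIso e)

lemma of_isZero_right (hY : IsZero Y) : HomVanishes W Y := fun f => hY.eq_of_tgt f 0

end HomVanishes

variable [HasShift E ℤ]

def ShiftRightOrthogonal (𝒲 : E → Prop) (Y : E) : Prop :=
  ∀ W, 𝒲 W → HomVanishes W (Y⟦(1:ℤ)⟧)

lemma ShiftRightOrthogonal.of_retract {𝒲 : E → Prop} {Y Y' : E} (h : ShiftRightOrthogonal 𝒲 Y)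
    (e : Retract Y' Y) : ShiftRightOrthogonal 𝒲 Y' := fun W hW =>
  (h W hW).of_retract_right (e.map (shiftFunctor E (1:ℤ)))

variable [∀ n : ℤ, (shiftFunctor E n).Additive]

namespace HomVanishes

variable {W Y : E}

lemma shift (h : HomVanishes W Y) (n : ℤ) : HomVanishes (W⟦n⟧) (Y⟦n⟧) := fun f => by
  rw [← (shiftFunctor E n).map_preimage f, h ((shiftFunctor E n).preimage f), Functor.map_zero]

lemma of_shift {n : ℤ} (h : HomVanishes (W⟦n⟧) (Y⟦n⟧)) : HomVanishes W Y := fun f =>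
  (shiftFunctor E n).map_injective (by rw [h (f⟦n⟧'), Functor.map_zero])

end HomVanishes

namespace ShiftRightOrthogonal

variable {𝒲 : E → Prop} {Y Y' : E}

lemma of_isZero (hY : IsZero Y) : ShiftRightOrthogonal 𝒲 Y := fun _ _ =>
  HomVanishes.of_isZero_right ((shiftFunctor E (1:ℤ)).map_isZero hY)

lemma biprod [HasBinaryBiproduct Y Y'] (h : ShiftRightOrthogonal 𝒲 Y)
    (h' : ShiftRightOrthogonal 𝒲 Y') : ShiftRightOrthogonal 𝒲 (Y ⊞ Y') := fun W hW f => by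
  have hf : f = (f ≫ biprod.fst⟦(1:ℤ)⟧') ≫ biprod.inl⟦(1:ℤ)⟧' +
      (f ≫ biprod.snd⟦(1:ℤ)⟧') ≫ biprod.inr⟦(1:ℤ)⟧' := by
    simp only [assoc, ← comp_add, ← Functor.map_comp, ← Functor.map_add, biprod.total]
    rw [CategoryTheory.Functor.map_id, comp_id]
  rw [hf, h W hW (f ≫ _), h' W hW (f ≫ _), zero_comp, zero_comp, add_zero]

lemma shift (h𝒲 : ∀ W, 𝒲 W → 𝒲 (W⟦(-1:ℤ)⟧)) (h : ShiftRightOrthogonal 𝒲 Y) :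
    ShiftRightOrthogonal 𝒲 (Y⟦(1:ℤ)⟧) := fun W hW =>
  ((h _ (h𝒲 W hW)).shift 1).of_iso_left ((shiftFunctorCompIsoId E (-1) 1 (by omega)).app W).symm

end ShiftRightOrthogonal

end

lemma HomVanishes.of_distTriang_left {T : Triangle C} (hT : T ∈ distTriang C) {Y : C}
    (h₁ : HomVanishes T.obj₁ Y) (h₃ : HomVanishes T.obj₃ Y) : HomVanishes T.obj₂ Y := fun f => by
  obtain ⟨g, rfl⟩ := Triangle.yoneda_exact₂ T hT f (h₁ _)
  rw [h₃ g, comp_zero]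

namespace CategoryTheory.Pretriangulated.Triangle

section

variable {T : Triangle C} (hT : T ∈ distTriang C) {W : C}
include hT

lemma homVanishes_obj₃_iff : HomVanishes W T.obj₃ ↔
    Function.Surjective (fun x : W ⟶ T.obj₁ => x ≫ T.mor₁) ∧
      ∀ x : W ⟶ T.obj₁⟦(1:ℤ)⟧, x ≫ T.mor₁⟦(1:ℤ)⟧' = 0 → x = 0 := by
  constructor
  · intro h
    refine ⟨fun y => ?_, fun x hx => ?_⟩
    · obtain ⟨x, hx⟩ := coyoneda_exact₂ T hT y (h _)
      exact ⟨x, hx.symm⟩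
    · obtain ⟨g, rfl⟩ := coyoneda_exact₁ T hT x hx
      rw [h g, zero_comp]
  · rintro ⟨hsurj, hinj⟩ f
    have hf : f ≫ T.mor₃ = 0 :=
      hinj _ (by rw [assoc, comp_distTriang_mor_zero₃₁ _ hT, comp_zero])
    obtain ⟨t, rfl⟩ := coyoneda_exact₃ T hT f hf
    obtain ⟨s, rfl⟩ := hsurj t
    rw [assoc, comp_distTriang_mor_zero₁₂ _ hT, comp_zero]

lemma comp_mor₁_shift_of_homVanishes (h : HomVanishes W (T.obj₃⟦(1:ℤ)⟧)) :
    Function.Surjective (fun x : W ⟶ T.obj₁⟦(1:ℤ)⟧ => x ≫ T.mor₁⟦(1:ℤ)⟧') ∧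
      ∀ x : W ⟶ T.obj₁⟦(1:ℤ)⟧⟦(1:ℤ)⟧, x ≫ T.mor₁⟦(1:ℤ)⟧'⟦(1:ℤ)⟧' = 0 → x = 0 := by
  refine ⟨fun y => ?_, fun x hx => ?_⟩
  · obtain ⟨x, hx⟩ := coyoneda_exact₃ _ (rot_of_distTriang _ (rot_of_distTriang _ hT)) y (h _)
    change W ⟶ T.obj₁⟦(1:ℤ)⟧ at x
    change y = x ≫ (-(T.mor₁⟦(1:ℤ)⟧')) at hx
    exact ⟨-x, by simp only [hx, comp_neg, neg_comp]⟩
  · obtain ⟨g, hg⟩ := coyoneda_exact₁ _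
      (rot_of_distTriang _ (rot_of_distTriang _ (rot_of_distTriang _ hT))) x (by
        change x ≫ (-(T.mor₁⟦(1:ℤ)⟧'))⟦(1:ℤ)⟧' = 0
        rw [Functor.map_neg, comp_neg, hx, neg_zero])
    change W ⟶ T.obj₃⟦(1:ℤ)⟧ at g
    rw [hg, h g]
    exact zero_comp

end

variable {T₁ T₂ : Triangle C} (hT₁ : T₁ ∈ distTriang C) (hT₂ : T₂ ∈ distTriang C)
  (φ : T₁ ⟶ T₂) {W : C}
include hT₁ hT₂

lemma surjective_comp_hom₃ (h₂ : Function.Surjective (fun x : W ⟶ T₁.obj₂ => x ≫ φ.hom₂))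
    (h₄ : Function.Surjective (fun x : W ⟶ T₁.obj₁⟦(1:ℤ)⟧ => x ≫ φ.hom₁⟦(1:ℤ)⟧'))
    (h₅ : ∀ x : W ⟶ T₁.obj₂⟦(1:ℤ)⟧, x ≫ φ.hom₂⟦(1:ℤ)⟧' = 0 → x = 0) :
    Function.Surjective (fun x : W ⟶ T₁.obj₃ => x ≫ φ.hom₃) := by
  intro y
  obtain ⟨x₁, hx₁⟩ := h₄ (y ≫ T₂.mor₃)
  dsimp only at hx₁
  have hx₁₀ : x₁ ≫ T₁.mor₁⟦(1:ℤ)⟧' = 0 := h₅ _ (by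
    rw [assoc, ← Functor.map_comp, φ.comm₁, Functor.map_comp, ← assoc, hx₁, assoc,
      comp_distTriang_mor_zero₃₁ _ hT₂, comp_zero])
  obtain ⟨z, rfl⟩ := coyoneda_exact₁ T₁ hT₁ x₁ hx₁₀
  obtain ⟨t, ht⟩ := coyoneda_exact₃ T₂ hT₂ (y - z ≫ φ.hom₃) (by
    rw [sub_comp, assoc, ← φ.comm₃, ← assoc, hx₁, sub_self])
  obtain ⟨s, rfl⟩ := h₂ t
  refine ⟨z + s ≫ T₁.mor₂, ?_⟩
  dsimp only at ht ⊢
  rw [add_comp, assoc, φ.comm₂, ← assoc, ← ht, add_sub_cancel]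

lemma eq_zero_of_comp_hom₃ (h₁ : Function.Surjective (fun x : W ⟶ T₁.obj₁ => x ≫ φ.hom₁))
    (h₂ : ∀ x : W ⟶ T₁.obj₂, x ≫ φ.hom₂ = 0 → x = 0)
    (h₄ : ∀ x : W ⟶ T₁.obj₁⟦(1:ℤ)⟧, x ≫ φ.hom₁⟦(1:ℤ)⟧' = 0 → x = 0)
    (x : W ⟶ T₁.obj₃) (hx : x ≫ φ.hom₃ = 0) : x = 0 := by
  obtain ⟨t, rfl⟩ := coyoneda_exact₃ T₁ hT₁ x
    (h₄ _ (by rw [assoc, φ.comm₃, ← assoc, hx, zero_comp]))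
  obtain ⟨r, hr⟩ := coyoneda_exact₂ T₂ hT₂ (t ≫ φ.hom₂) (by rw [assoc, ← φ.comm₂, ← assoc, hx])
  obtain ⟨q, rfl⟩ := h₁ r
  have ht : t = q ≫ T₁.mor₁ :=
    sub_eq_zero.1 (h₂ _ (by rw [sub_comp, hr, assoc, assoc, φ.comm₁, sub_self]))
  rw [ht, assoc, comp_distTriang_mor_zero₁₂ _ hT₁, comp_zero]

end CategoryTheory.Pretriangulated.Triangle

def IsNegative (S : C → Prop) : Prop :=
  ∀ (X Y : C), S X → S Y → ∀ (n : ℤ), 0 < n → ∀ (f : X ⟶ Y⟦n⟧), f = 0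

def GeneratesTriangulated (S : C → Prop) : Prop :=
  ∀ (T : ObjectProperty C) [T.IsTriangulated], (∀ X, S X → T X) → ∀ X : C, T X

inductive GEClosure (S : C → Prop) : C → Prop
  | shift {A : C} {n : ℤ} (hA : S A) (hn : n ≤ 0) : GEClosure S (A⟦n⟧)
  | iso {X Y : C} (e : X ≅ Y) (h : GEClosure S X) : GEClosure S Y
  | ext (T : Triangle C) (hT : T ∈ distTriang C) (h₁ : GEClosure S T.obj₁)
      (h₃ : GEClosure S T.obj₃) : GEClosure S T.obj₂

variable {S 𝒲 : C → Prop}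

namespace GEClosure

lemma of_S {A : C} (hA : S A) : GEClosure S A :=
  iso ((shiftFunctorZero C ℤ).app A) (shift hA le_rfl)

lemma of_isZero (hzero : ∃ (Z : C) (_ : IsZero Z), S Z) {X : C} (hX : IsZero X) :
    GEClosure S X :=
  let ⟨_, hZ, hZS⟩ := hzero
  iso (hZ.iso hX) (of_S hZS)

lemma shift_nonpos {W : C} (h : GEClosure S W) {n : ℤ} (hn : n ≤ 0) : GEClosure S (W⟦n⟧) := by
  induction h with
  | @shift A m hA hm => exact iso ((shiftFunctorAdd' C m n (m + n) rfl).app A) (shift hA (by omega))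
  | iso e _ ih => exact iso ((CategoryTheory.shiftFunctor C n).mapIso e) ih
  | ext T hT _ _ ih₁ ih₃ => exact ext _ (Triangle.shift_distinguished T hT n) ih₁ ih₃

lemma biprod {W₁ W₂ : C} (h₁ : GEClosure S W₁) (h₂ : GEClosure S W₂) : GEClosure S (W₁ ⊞ W₂) :=
  ext _ (binaryBiproductTriangle_distinguished W₁ W₂) h₁ h₂

lemma homVanishes_shift (hneg : IsNegative S) {W : C} (hW : GEClosure S W) {B : C} (hB : S B)
    {m : ℤ} (hm : 0 < m) : HomVanishes W (B⟦m⟧) := by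
  induction hW with
  | @shift A n hA hn =>
    have h : HomVanishes A (B⟦m - n⟧) := hneg A B hA hB (m - n) (by omega)
    exact (h.shift n).of_iso_right ((shiftFunctorAdd' C (m - n) n m (by omega)).app B)
  | iso e _ ih => exact ih.of_iso_left e.symm
  | ext T hT _ _ ih₁ ih₃ => exact HomVanishes.of_distTriang_left hT ih₁ ih₃

end GEClosure

lemma shiftRightOrthogonal_GEClosure_shift_of_S (hneg : IsNegative S) {B : C} (hB : S B) {n : ℤ}
    (hn : 0 ≤ n) : ShiftRightOrthogonal (GEClosure S) (B⟦n⟧) :=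
  fun _ hW => (hW.homVanishes_shift hneg hB (by omega : 0 < n + 1)).of_iso_right
    ((shiftFunctorAdd' C n 1 (n + 1) rfl).app B).symm

namespace WeightStructure

variable (w : WeightStructure C)

lemma LE_of_iso {X Y : C} (e : X ≅ Y) (h : w.LE X) : w.LE Y :=
  w.LE_retract e.inv e.hom (by simp) h

lemma GE_of_iso {X Y : C} (e : X ≅ Y) (h : w.GE X) : w.GE Y :=
  w.GE_retract e.inv e.hom (by simp) h

lemma LE_shift_nonneg {X : C} (h : w.LE X) {n : ℤ} (hn : 0 ≤ n) : w.LE (X⟦n⟧) := by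
  induction n, hn using Int.leInduction with
  | base => exact w.LE_of_iso ((shiftFunctorZero C ℤ).app X).symm h
  | succ n _ ih =>
    exact w.LE_of_iso ((shiftFunctorAdd' C n 1 (n + 1) rfl).app X).symm (w.LE_shift _ ih)

lemma GE_shift_nonpos {X : C} (h : w.GE X) {n : ℤ} (hn : n ≤ 0) : w.GE (X⟦n⟧) := by
  induction n, hn using Int.leInductionDown with
  | base => exact w.GE_of_iso ((shiftFunctorZero C ℤ).app X).symm h
  | pred n _ ih =>
    exact w.GE_of_iso ((shiftFunctorAdd' C n (-1) (n - 1) (by omega)).app X).symm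
      (w.GE_shift _ ih)

lemma LE_iff {Y : C} : w.LE Y ↔ ShiftRightOrthogonal w.GE Y := by
  refine ⟨fun hY W hW f => w.orthogonality f hW hY, fun hY => ?_⟩
  obtain ⟨A, B, hA, hB, a, f, g, hT⟩ := w.weight_decomposition Y
  have : Mono a := Triangle.mono₁ _ hT (hY B hB g)
  have := isSplitMono_of_mono a
  exact w.LE_retract a (retraction a) (IsSplitMono.id a) hA

lemma GE_iff {X : C} : w.GE X ↔ ∀ Y, w.LE Y → HomVanishes X (Y⟦(1:ℤ)⟧) := by
  refine ⟨fun hX Y hY f => w.orthogonality f hX hY, fun hX => ?_⟩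
  obtain ⟨A, B, hA, hB, a, f, g, hT⟩ := w.weight_decomposition (X⟦(-1:ℤ)⟧)
  have e : X⟦(-1:ℤ)⟧⟦(1:ℤ)⟧ ≅ X := (shiftFunctorCompIsoId C (-1) 1 (by omega)).app X
  have : Epi g := Triangle.epi₂ _ (rot_of_distTriang _ hT) (by
    change -(a⟦(1:ℤ)⟧') = 0
    rw [((hX A hA).of_iso_left e) (a⟦(1:ℤ)⟧'), neg_zero])
  have := isSplitEpi_of_epi g
  exact w.GE_of_iso e (w.GE_retract (section_ g) g (IsSplitEpi.id g) hB)

lemma GE_of_distTriang {T : Triangle C} (hT : T ∈ distTriang C) (h₁ : w.GE T.obj₁)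
    (h₃ : w.GE T.obj₃) : w.GE T.obj₂ :=
  w.GE_iff.2 fun Y hY =>
    HomVanishes.of_distTriang_left hT (w.GE_iff.1 h₁ Y hY) (w.GE_iff.1 h₃ Y hY)

lemma GE_of_GEClosure (hS : ∀ X, S X → w.heart X) {W : C} (hW : GEClosure S W) : w.GE W := by
  induction hW with
  | shift hA hn => exact w.GE_shift_nonpos (hS _ hA).2 hn
  | iso e _ ih => exact w.GE_of_iso e ih
  | ext T hT _ _ ih₁ ih₃ => exact w.GE_of_distTriang hT ih₁ ih₃

lemma ext_of_LE {w w' : WeightStructure C} (h : w.LE = w'.LE) : w = w' := by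
  have hGE : w.GE = w'.GE := funext fun X => propext (by rw [w.GE_iff, w'.GE_iff, h])
  cases w
  cases w'
  cases h
  cases hGE
  rfl

end WeightStructure

def HasWeightDecomposition (S 𝒲 : C → Prop) (X : C) : Prop :=
  ∃ (P Q : C) (_ : ShiftRightOrthogonal 𝒲 P) (_ : GEClosure S Q) (a : X ⟶ P) (f : P ⟶ Q)
    (g : Q ⟶ X⟦(1:ℤ)⟧), Triangle.mk a f g ∈ distTriang C

namespace HasWeightDecomposition

lemma of_iso {X X' : C} (e : X ≅ X') (h : HasWeightDecomposition S 𝒲 X) :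
    HasWeightDecomposition S 𝒲 X' := by
  obtain ⟨P, Q, hP, hQ, a, f, g, hT⟩ := h
  refine ⟨P, Q, hP, hQ, e.inv ≫ a, f, g ≫ e.hom⟦(1:ℤ)⟧', isomorphic_distinguished _ hT _ ?_⟩
  refine Triangle.isoMk _ _ e.symm (Iso.refl _) (Iso.refl _) (by simp [Triangle.mk])
    (by simp [Triangle.mk]) ?_
  dsimp [Triangle.mk]
  simp [← Functor.map_comp]

lemma shift_of_S (hzero : ∃ (Z : C) (_ : IsZero Z), S Z)
    (h𝒲S : ∀ B, S B → ∀ n : ℤ, 0 ≤ n → ShiftRightOrthogonal 𝒲 (B⟦n⟧))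
    {A : C} (hA : S A) (n : ℤ) : HasWeightDecomposition S 𝒲 (A⟦n⟧) := by
  by_cases hn : 0 ≤ n
  · exact ⟨A⟦n⟧, 0, h𝒲S A hA n hn, .of_isZero hzero (isZero_zero C), 𝟙 _, 0, 0,
      contractible_distinguished _⟩
  · exact ⟨0, A⟦n⟧⟦(1:ℤ)⟧, .of_isZero (isZero_zero C),
      .iso ((shiftFunctorAdd' C n 1 (n + 1) rfl).app A) (.shift hA (by omega)), 0, 0, 𝟙 _,
      contractible_distinguished₂ _⟩

lemma ext₂ (h𝒲 : ∀ W, GEClosure S W → 𝒲 W) {T : Triangle C} (hT : T ∈ distTriang C)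
    (h₁ : HasWeightDecomposition S 𝒲 T.obj₁) (h₃ : HasWeightDecomposition S 𝒲 T.obj₃) :
    HasWeightDecomposition S 𝒲 T.obj₂ := by
  obtain ⟨P₁, Q₁, hP₁, hQ₁, a₁, f₁, g₁, hD₁⟩ := h₁
  obtain ⟨P₃, Q₃, hP₃, hQ₃, a₃, f₃, g₃, hD₃⟩ := h₃
  have hD₁' := rot_of_distTriang _ (rot_of_distTriang _ hD₁)
  have hD₃' := inv_rot_of_distTriang _ hD₃
  -- `ψ ≫ T.mor₃` lifts to `h` through `g₁` as `Q₃⟦-1⟧ ∈ 𝒲`. The cone `Y` of `h` lies in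
  -- `GEClosure S`, `(ψ, g₁)` completes to a morphism of triangles `φ` with third component `γ`,
  -- and the cocone `P` of `γ` is the new part of weight `≤ 0`.
  let ψ : Q₃⟦(-1:ℤ)⟧ ⟶ T.obj₃ := (Triangle.mk a₃ f₃ g₃).invRotate.mor₁
  obtain ⟨h, hh⟩ := ((Triangle.homVanishes_obj₃_iff hD₁').1
    (hP₁ _ (h𝒲 _ (hQ₃.shift_nonpos (by omega))))).1 (ψ ≫ T.mor₃)
  obtain ⟨Y, j₁, j₂, hR⟩ := distinguished_cocone_triangle h
  obtain ⟨γ, hγ₂, hγ₃⟩ := complete_distinguished_triangle_morphism _ _ hR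
    (rot_of_distTriang _ (rot_of_distTriang _ hT)) ψ g₁ hh
  let φ := Triangle.homMk _ _ ψ g₁ γ hh hγ₂ hγ₃
  obtain ⟨P, a, b, hP⟩ := distinguished_cocone_triangle₂ γ
  refine ⟨P, Y, fun W hW => ?_, .ext _ (rot_of_distTriang _ hR) hQ₁
    (.iso ((shiftFunctorCompIsoId C (-1) 1 (by omega)).app Q₃).symm hQ₃), a, b, γ, hP⟩
  -- `Hom(W, P⟦1⟧) = 0` because `γ` is onto on `Hom(W, -)` and `γ⟦1⟧` is injective on it: the five
  -- lemma for `φ` and for `φ⟦1⟧`.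
  obtain ⟨hg₁, hg₁'⟩ := (Triangle.homVanishes_obj₃_iff hD₁').1 (hP₁ W hW)
  obtain ⟨hψ, hψ'⟩ := Triangle.comp_mor₁_shift_of_homVanishes hD₃' (hP₃ W hW)
  exact (Triangle.homVanishes_obj₃_iff (rot_of_distTriang _ (rot_of_distTriang _ hP))).2
    ⟨Triangle.surjective_comp_hom₃ hR (rot_of_distTriang _ (rot_of_distTriang _ hT)) φ hg₁ hψ hg₁',
      Triangle.eq_zero_of_comp_hom₃ (Triangle.shift_distinguished _ hR 1)
        (Triangle.shift_distinguished _ (rot_of_distTriang _ (rot_of_distTriang _ hT)) 1)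
        ((CategoryTheory.shiftFunctor (Triangle C) (1:ℤ)).map φ) hψ hg₁' hψ'⟩

end HasWeightDecomposition

lemma hasWeightDecomposition (hzero : ∃ (Z : C) (_ : IsZero Z), S Z)
    (hgen : GeneratesTriangulated S) (h𝒲 : ∀ W, GEClosure S W → 𝒲 W)
    (h𝒲S : ∀ B, S B → ∀ n : ℤ, 0 ≤ n → ShiftRightOrthogonal 𝒲 (B⟦n⟧)) (X : C) :
    HasWeightDecomposition S 𝒲 X := by
  let P : ObjectProperty C := fun X => ∀ n : ℤ, HasWeightDecomposition S 𝒲 (X⟦n⟧)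
  have hP : ∀ A, S A → P A := fun A hA => .shift_of_S hzero h𝒲S hA
  have : P.IsTriangulated :=
    { exists_zero := let ⟨Z, hZ, hZS⟩ := hzero; ⟨Z, hZ, hP Z hZS⟩
      isStableUnderShiftBy := fun a =>
        ⟨fun X hX n => (hX (a + n)).of_iso ((shiftFunctorAdd C a n).app X)⟩
      ext₂' := fun T hT h₁ h₃ => P.le_isoClosure _ fun n =>
        .ext₂ h𝒲 (Triangle.shift_distinguished T hT n) (h₁ n) (h₃ n) }
  exact (hgen P hP X 0).of_iso ((shiftFunctorZero C ℤ).app X)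

lemma shiftRightOrthogonal_of_GEClosure (hzero : ∃ (Z : C) (_ : IsZero Z), S Z)
    (hgen : GeneratesTriangulated S) (h𝒲 : ∀ W, GEClosure S W → 𝒲 W)
    (h𝒲S : ∀ B, S B → ∀ n : ℤ, 0 ≤ n → ShiftRightOrthogonal 𝒲 (B⟦n⟧)) {Y : C}
    (hY : ShiftRightOrthogonal (GEClosure S) Y) : ShiftRightOrthogonal 𝒲 Y := by
  obtain ⟨P, Q, hP, hQ, a, f, g, hT⟩ := hasWeightDecomposition hzero hgen h𝒲 h𝒲S Y
  have : Mono a := Triangle.mono₁ _ hT (hY Q hQ g)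
  have := isSplitMono_of_mono a
  exact hP.of_retract ⟨a, retraction a, IsSplitMono.id a⟩

lemma shiftRightOrthogonal_GEClosure_of_S (hneg : IsNegative S) {B : C} (hB : S B) :
    ShiftRightOrthogonal (GEClosure S) B :=
  fun _ hW => hW.homVanishes_shift hneg hB one_pos

lemma GEClosure.exists_factorization (hzero : ∃ (Z : C) (_ : IsZero Z), S Z)
    (hadd : ∀ (X Y : C), S X → S Y → S (X ⊞ Y)) (hneg : IsNegative S) {X : C} (hX : GEClosure S X) :
    ∃ (P : C) (_ : S P) (a : X ⟶ P), ∀ Y, ShiftRightOrthogonal (GEClosure S) Y →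
      ∀ f : X ⟶ Y, ∃ g : P ⟶ Y, a ≫ g = f := by
  induction hX with
  | @shift A n hA hn =>
    rcases hn.lt_or_eq with hn | rfl
    · obtain ⟨Z, _, hZS⟩ := hzero
      refine ⟨Z, hZS, 0, fun Y hY f => ⟨0, ?_⟩⟩
      have h : HomVanishes (A⟦n⟧⟦(1:ℤ)⟧) (Y⟦(1:ℤ)⟧) :=
        (hY _ (.shift hA (by omega : n + 1 ≤ 0))).of_iso_left
          ((shiftFunctorAdd' C n 1 (n + 1) rfl).app A).symm
      rw [zero_comp, HomVanishes.of_shift h f]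
    · exact ⟨A, hA, ((shiftFunctorZero C ℤ).app A).hom,
        fun Y _ f => ⟨((shiftFunctorZero C ℤ).app A).inv ≫ f, by simp⟩⟩
  | iso e _ ih =>
    obtain ⟨P, hP, a, ha⟩ := ih
    refine ⟨P, hP, e.inv ≫ a, fun Y hY f => ?_⟩
    obtain ⟨g, hg⟩ := ha Y hY (e.hom ≫ f)
    exact ⟨g, by simp [hg]⟩
  | ext T hT _ h₃ ih₁ ih₃ =>
    obtain ⟨P₁, hP₁, a₁, ha₁⟩ := ih₁
    obtain ⟨P₃, hP₃, a₃, ha₃⟩ := ih₃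
    have hvan : HomVanishes (T.obj₃⟦(-1:ℤ)⟧) P₁ := HomVanishes.of_shift (n := 1)
      ((shiftRightOrthogonal_GEClosure_of_S hneg hP₁ _ h₃).of_iso_left
        ((shiftFunctorCompIsoId C (-1) 1 (by omega)).app _))
    obtain ⟨e, he⟩ := Triangle.yoneda_exact₂ _ (inv_rot_of_distTriang _ hT) a₁ (hvan _)
    change T.obj₂ ⟶ P₁ at e
    change a₁ = T.mor₁ ≫ e at he
    refine ⟨P₁ ⊞ P₃, hadd _ _ hP₁ hP₃, biprod.lift e (T.mor₂ ≫ a₃), fun Y hY f => ?_⟩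
    obtain ⟨g₁, hg₁⟩ := ha₁ Y hY (T.mor₁ ≫ f)
    obtain ⟨t, ht⟩ := Triangle.yoneda_exact₂ T hT (f - e ≫ g₁) (by
      rw [comp_sub, ← assoc, ← he, hg₁, sub_self])
    obtain ⟨g₃, hg₃⟩ := ha₃ Y hY t
    refine ⟨biprod.desc g₁ g₃, ?_⟩
    rw [biprod.lift_desc, assoc, hg₃, ← ht, add_sub_cancel]

def generatedWeightStructure (S : C → Prop) (hzero : ∃ (Z : C) (_ : IsZero Z), S Z)
    (hneg : IsNegative S) (hgen : GeneratesTriangulated S) : WeightStructure C where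
  LE := ShiftRightOrthogonal (GEClosure S)
  GE := ObjectProperty.retractClosure (GEClosure S)
  LE_retract _ _ i r hir hY := hY.of_retract ⟨i, r, hir⟩
  GE_retract _ _ i r hir hY := ObjectProperty.prop_of_retract _ ⟨i, r, hir⟩ hY
  LE_add _ _ hX hY := hX.biprod hY
  GE_add _ _ := by
    rintro ⟨W₁, hW₁, ⟨e₁⟩⟩ ⟨W₂, hW₂, ⟨e₂⟩⟩
    exact ⟨W₁ ⊞ W₂, hW₁.biprod hW₂, ⟨biprod.map e₁.i e₂.i, biprod.map e₁.r e₂.r, by ext <;> simp⟩⟩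
  LE_shift _ hY := hY.shift fun _ hW => hW.shift_nonpos (by omega)
  GE_shift _ := by
    rintro ⟨W, hW, ⟨e⟩⟩
    exact ⟨_, hW.shift_nonpos (by omega), ⟨e.map (CategoryTheory.shiftFunctor C (-1:ℤ))⟩⟩
  orthogonality _ _ f := by
    rintro ⟨W, hW, ⟨e⟩⟩ hY
    exact (hY W hW).of_retract_left e f
  weight_decomposition X := by
    obtain ⟨P, Q, hP, hQ, a, f, g, hT⟩ := hasWeightDecomposition hzero hgen (fun _ hW => hW)
      (fun _ hB _ hn => shiftRightOrthogonal_GEClosure_shift_of_S hneg hB hn) X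
    exact ⟨P, Q, hP, ObjectProperty.le_retractClosure _ _ hQ, a, f, g, hT⟩

section

variable {S : C → Prop} (hzero : ∃ (Z : C) (_ : IsZero Z), S Z) (hneg : IsNegative S)
  (hgen : GeneratesTriangulated S)

lemma generatedWeightStructure_heart_iff (hadd : ∀ (X Y : C), S X → S Y → S (X ⊞ Y)) {X : C} :
    (generatedWeightStructure S hzero hneg hgen).heart X ↔
      ∃ (Y : C) (_ : S Y) (i : X ⟶ Y) (r : Y ⟶ X), i ≫ r = 𝟙 X := by
  constructor
  · rintro ⟨hX, W, hW, ⟨e⟩⟩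
    obtain ⟨P, hP, a, ha⟩ := hW.exists_factorization hzero hadd hneg
    obtain ⟨g, hg⟩ := ha X hX e.r
    exact ⟨P, hP, e.i ≫ a, g, by rw [assoc, hg, e.retract]⟩
  · rintro ⟨A, hA, i, r, hir⟩
    exact ⟨(shiftRightOrthogonal_GEClosure_of_S hneg hA).of_retract ⟨i, r, hir⟩,
      A, .of_S hA, ⟨⟨i, r, hir⟩⟩⟩

lemma eq_generatedWeightStructure (w : WeightStructure C) (hw : ∀ X, S X → w.heart X) :
    w = generatedWeightStructure S hzero hneg hgen := by
  refine WeightStructure.ext_of_LE (funext fun Y => propext ⟨fun hY W hW f =>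
    w.orthogonality f (w.GE_of_GEClosure hw hW) hY, fun hY => w.LE_iff.2 ?_⟩)
  exact shiftRightOrthogonal_of_GEClosure hzero hgen (fun _ => w.GE_of_GEClosure hw)
    (fun _ hB _ hn => w.LE_iff.1 (w.LE_shift_nonneg (hw _ hB).1 hn)) hY

end

/-- if `S` is the class of objects of a full additive subcategory `D ⊆ C` that
is negative (`Hom(X, Y[n]) = 0` for `X, Y ∈ D`, `n > 0`) and generates `C` as a triangulated
category, then there exists a unique weight structure `w` on `C` with `D ⊆ C^{w=0}`;
its heart is the Karoubi-closure of `D` in `C` (the class of retracts of objects of `D`). -/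
theorem weight_structure_from_negative_generators (S : C → Prop)
    (hzero : ∃ (Z : C) (_ : IsZero Z), S Z)
    (hadd : ∀ (X Y : C), S X → S Y → S (X ⊞ Y))
    (hneg : ∀ (X Y : C), S X → S Y → ∀ (n : ℤ), 0 < n → ∀ (f : X ⟶ Y⟦n⟧), f = 0)
    (hgen : ∀ (T : ObjectProperty C) [T.IsTriangulated], (∀ X, S X → T X) → ∀ X : C, T X) :
    ∃ w : WeightStructure C,
      (∀ X, S X → w.heart X) ∧
      (∀ X : C, w.heart X ↔ ∃ (Y : C) (_ : S Y) (ii : X ⟶ Y) (r : Y ⟶ X), ii ≫ r = 𝟙 X) ∧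
      (∀ w' : WeightStructure C, (∀ X, S X → w'.heart X) → w' = w) := by
  refine ⟨generatedWeightStructure S hzero hneg hgen, fun X hX => ?_,
    fun X => generatedWeightStructure_heart_iff hzero hneg hgen hadd,
    fun w hw => eq_generatedWeightStructure hzero hneg hgen w hw⟩
  exact ⟨shiftRightOrthogonal_GEClosure_of_S hneg hX,
    ObjectProperty.le_retractClosure _ _ (.of_S hX)⟩
end

section
/- Let Φ : C^{op} × D → A be a duality between triangulated categories C and D (a bifunctor, homological in both variables, with natural isomorphisms Φ(X, Y) ≅ Φ(X[1], Y[1])). Suppose a weight structure w on C is orthogonal to a t-structure t on D with respect to Φ. Then for any X ∈ C^{w=0}, the functor Y ↦ Φ(X, Y) restricted to the heart of t is an exact functor between abelian categories. -/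
/-!
Orthogonality kills `Φ(X, -)` on `Y⟦-1⟧` and on `Y⟦1⟧` for `Y` in the heart of `t` once `X` is in
the heart of `w`. For a triangle `T₁ → T₂ → T₃ → T₁⟦1⟧` in the heart, the long exact sequence of
the homological functor `Φ(X, -)` then reads `0 → Φ(X, T₁) → Φ(X, T₂) → Φ(X, T₃) → 0`.
-/

open CategoryTheory CategoryTheory.Limits CategoryTheory.Pretriangulated CategoryTheory.Category

universe v u

variable (C : Type u) [Category.{v} C] [Preadditive C] [HasZeroObject C] [HasShift C ℤ]
  [∀ n : ℤ, (CategoryTheory.shiftFunctor C n).Additive] [Pretriangulated C]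

variable {C}

open Opposite

variable {D : Type*} [Category D] [Preadditive D] [HasZeroObject D] [HasShift D ℤ]
  [∀ n : ℤ, (CategoryTheory.shiftFunctor D n).Additive] [Pretriangulated D]

/-- the class of objects of the heart of a t-structure -/
def heartT (t : Triangulated.TStructure D) (Y : D) : Prop := t.le 0 Y ∧ t.ge 0 Y

namespace CategoryTheory.Functor

variable {A : Type*} [Category A] [Abelian A] (F : D ⥤ A) [F.IsHomological] {T : Triangle D}

lemma mono_map_mor₁_of_isZero (hT : T ∈ distTriang D) (h : IsZero (F.obj (T.obj₃⟦(-1 : ℤ)⟧))) :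
    Mono (F.map T.mor₁) :=
  (F.map_distinguished_exact _ (inv_rot_of_distTriang T hT)).mono_g (h.eq_of_src _ _)

lemma epi_map_mor₂_of_isZero (hT : T ∈ distTriang D) (h : IsZero (F.obj (T.obj₁⟦(1 : ℤ)⟧))) :
    Epi (F.map T.mor₂) :=
  (F.map_distinguished_exact _ (rot_of_distTriang T hT)).epi_f (h.eq_of_tgt _ _)

end CategoryTheory.Functor

lemma heartT.le_neg_one_shift_one {t : Triangulated.TStructure D} {Y : D} (hY : heartT t Y) :
    t.le (-1) (Y⟦(1 : ℤ)⟧) :=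
  t.le_shift 0 1 (-1) (by omega) _ hY.1

lemma heartT.ge_one_shift_neg_one {t : Triangulated.TStructure D} {Y : D} (hY : heartT t Y) :
    t.ge 1 (Y⟦(-1 : ℤ)⟧) :=
  t.ge_shift 0 (-1) 1 (by omega) _ hY.2

/-- let `Φ : Cᵒᵖ × D → A` be a duality (bi-additive, homological in both
variables, with binatural isomorphisms `Φ(X, Y) ≅ Φ(X[1], Y[1])`), and suppose the weight
structure `w` on `C` is orthogonal to the t-structure `t` on `D` with respect to `Φ`.
Then for any `X ∈ C^{w=0}`, the functor `Y ↦ Φ(X, Y)` is exact on the heart of `t`: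
it sends any distinguished triangle in `D` with all vertices in the heart of `t`
(equivalently, any short exact sequence in the heart) to a short exact sequence in `A`. -/
theorem duality_orthogonal_exact_on_heart
    {A : Type*} [Category A] [Abelian A]
    (w : WeightStructure C) (t : Triangulated.TStructure D)
    (Φ : Cᵒᵖ ⥤ D ⥤ A) [∀ X : Cᵒᵖ, (Φ.obj X).Additive] [∀ X : Cᵒᵖ, (Φ.obj X).IsHomological]
    -- Φ is (co)homological in the first variable
    (hhom₁ : ∀ (T : Triangle C), (T ∈ distTriang C) → ∀ (Y : D),
      ((Φ.map T.mor₂.op).app Y ≫ (Φ.map T.mor₁.op).app Y = 0) ∧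
      (∀ hz : (Φ.map T.mor₂.op).app Y ≫ (Φ.map T.mor₁.op).app Y = 0,
        (ShortComplex.mk _ _ hz).Exact))
    -- the binatural isomorphism Φ(X, Y) ≅ Φ(X[1], Y[1])
    (e : ∀ (X : C) (Y : D),
      (Φ.obj (op X)).obj Y ≅ (Φ.obj (op (X⟦(1:ℤ)⟧))).obj (Y⟦(1:ℤ)⟧))
    (he₁ : ∀ {X X' : C} (f : X ⟶ X') (Y : D),
      (Φ.map f.op).app Y ≫ (e X Y).hom =
        (e X' Y).hom ≫ (Φ.map ((CategoryTheory.shiftFunctor C (1:ℤ)).map f).op).app (Y⟦(1:ℤ)⟧))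
    (he₂ : ∀ (X : C) {Y Y' : D} (g : Y ⟶ Y'),
      (Φ.obj (op X)).map g ≫ (e X Y').hom =
        (e X Y).hom ≫ (Φ.obj (op (X⟦(1:ℤ)⟧))).map ((CategoryTheory.shiftFunctor D (1:ℤ)).map g))
    -- orthogonality of w and t with respect to Φ
    (hort₁ : ∀ (X : C) (Y : D), w.LE X → t.ge 1 Y → IsZero ((Φ.obj (op X)).obj Y))
    (hort₂ : ∀ (X : C) (Y : D), w.GE X → t.le (-1) Y → IsZero ((Φ.obj (op X)).obj Y)) :
    ∀ (X : C), w.heart X → ∀ (T : Triangle D), (T ∈ distTriang D) →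
      heartT t T.obj₁ → heartT t T.obj₂ → heartT t T.obj₃ →
      Mono ((Φ.obj (op X)).map T.mor₁) ∧ Epi ((Φ.obj (op X)).map T.mor₂) ∧
      ((Φ.obj (op X)).map T.mor₁ ≫ (Φ.obj (op X)).map T.mor₂ = 0) ∧
      (∀ hz : (Φ.obj (op X)).map T.mor₁ ≫ (Φ.obj (op X)).map T.mor₂ = 0,
        (ShortComplex.mk _ _ hz).Exact) := by
  intro X hX T hT h₁ _ h₃
  let F := Φ.obj (op X)
  exact ⟨F.mono_map_mor₁_of_isZero hT (hort₁ X _ hX.1 h₃.ge_one_shift_neg_one),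
    F.epi_map_mor₂_of_isZero hT (hort₂ X _ hX.2 h₁.le_neg_one_shift_one),
    ((shortComplexOfDistTriangle T hT).map F).zero, fun _ => F.map_distinguished_exact T hT⟩
end

section
/- Let D →^{i_*} C →^{j^*} E be a short exact sequence of triangulated categories (i_* a full embedding, j^* the Verdier localization of C by the image of i_*). Suppose D and E are endowed with weight structures w_D and w_E. Then there exists at most one weight structure w on C such that i_* and j^* are both weight-exact (i.e. i_*(D^{w_D≤0}) ⊆ C^{w≤0}, i_*(D^{w_D≥0}) ⊆ C^{w≥0}, and similarly for j^*). -/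
open CategoryTheory CategoryTheory.Limits CategoryTheory.Pretriangulated CategoryTheory.Category

universe v u

variable (C : Type u) [Category.{v} C] [Preadditive C] [HasZeroObject C] [HasShift C ℤ]
  [∀ n : ℤ, (CategoryTheory.shiftFunctor C n).Additive] [Pretriangulated C]

variable {C}

variable {D : Type*} [Category D] [Preadditive D] [HasZeroObject D] [HasShift D ℤ]
  [∀ n : ℤ, (CategoryTheory.shiftFunctor D n).Additive] [Pretriangulated D]
variable {E : Type*} [Category E] [Preadditive E] [HasZeroObject E] [HasShift E ℤ]
  [∀ n : ℤ, (CategoryTheory.shiftFunctor E n).Additive] [Pretriangulated E]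

/-- the class of morphisms of `C` whose cone lies in the essential image of `i : D ⥤ C`;
the Verdier quotient of `C` by (the image of) `D` is the localization at this class -/
def coneInImage (i : D ⥤ C) : MorphismProperty C :=
  fun _ X f => ∃ (Z : D) (g : X ⟶ i.obj Z) (h : i.obj Z ⟶ _⟦(1:ℤ)⟧),
    Triangle.mk f g h ∈ distTriang C

/-!
Two weight structures coincide as soon as each is orthogonal to the other, i.e.
`Hom(X, L⟦1⟧) = 0` for `X ∈ w₁^{≥0}`, `L ∈ w₂^{≤0}` and symmetrically: each class of a weight
structure is determined by orthogonality to the other one, through weight decompositions.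
So let `f : X ⟶ L⟦1⟧` with `X ∈ w₁^{≥0}`, `L ∈ w₂^{≤0}`. Weight-exactness of `j` and
orthogonality in `E` give `j f = 0`. As `j` is a Verdier localization, `f` then factors through
an object `i Z` of the image of `i`. Finally, a weight decomposition `Z⟦-1⟧ → A → B → Z` in `D`
shows that every map `X ⟶ i Z` factors through `i B`, and `i B ∈ w₂^{≥0}` is orthogonal to
`L ∈ w₂^{≤0}`.
-/

namespace CategoryTheory.MorphismProperty

variable {C' : Type*} [Category C'] (W : MorphismProperty C')

lemma multiplicativeClosure_exists_leftFraction
    (hW : ∀ ⦃X' X Y : C'⦄ (s : X' ⟶ X), W s → ∀ f : X' ⟶ Y,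
      ∃ (Y' : C') (t : Y ⟶ Y') (g : X ⟶ Y'), W t ∧ f ≫ t = s ≫ g)
    ⦃X' X : C'⦄ {s : X' ⟶ X} (hs : W.multiplicativeClosure s) {Y : C'} (f : X' ⟶ Y) :
    ∃ (Y' : C') (t : Y ⟶ Y') (g : X ⟶ Y'), W.multiplicativeClosure t ∧ f ≫ t = s ≫ g := by
  induction hs generalizing Y with
  | of s hs =>
    obtain ⟨Y', t, g, ht, hfg⟩ := hW s hs f
    exact ⟨Y', t, g, .of t ht, hfg⟩
  | id X => exact ⟨Y, 𝟙 Y, f, .id Y, by simp⟩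
  | comp_of s₁ s₂ _ hs₂ ih =>
    obtain ⟨Y₁, t₁, g₁, ht₁, hfg₁⟩ := ih f
    obtain ⟨Y₂, t₂, g₂, ht₂, hfg₂⟩ := hW s₂ hs₂ g₁
    exact ⟨Y₂, t₁ ≫ t₂, g₂, .comp_of t₁ t₂ ht₁ ht₂, by rw [reassoc_of% hfg₁, hfg₂, assoc]⟩

lemma multiplicativeClosure_ext
    (hW : ∀ ⦃X' X Y : C'⦄ (f₁ f₂ : X ⟶ Y) (s : X' ⟶ X), W s → s ≫ f₁ = s ≫ f₂ →
      ∃ (Y' : C') (t : Y ⟶ Y'), W t ∧ f₁ ≫ t = f₂ ≫ t)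
    ⦃X' X : C'⦄ {s : X' ⟶ X} (hs : W.multiplicativeClosure s) {Y : C'} (f₁ f₂ : X ⟶ Y)
    (h : s ≫ f₁ = s ≫ f₂) :
    ∃ (Y' : C') (t : Y ⟶ Y'), W.multiplicativeClosure t ∧ f₁ ≫ t = f₂ ≫ t := by
  induction hs generalizing Y with
  | of s hs =>
    obtain ⟨Y', t, ht, hf⟩ := hW f₁ f₂ s hs h
    exact ⟨Y', t, .of t ht, hf⟩
  | id X => exact ⟨Y, 𝟙 Y, .id Y, by simpa using h⟩
  | comp_of s₁ s₂ _ hs₂ ih =>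
    obtain ⟨Y₁, t₁, ht₁, hf₁⟩ := ih (s₂ ≫ f₁) (s₂ ≫ f₂) (by simpa using h)
    obtain ⟨Y₂, t₂, ht₂, hf₂⟩ := hW (f₁ ≫ t₁) (f₂ ≫ t₁) s₂ hs₂ (by simpa using hf₁)
    exact ⟨Y₂, t₁ ≫ t₂, .comp_of t₁ t₂ ht₁ ht₂, by simpa using hf₂⟩

lemma hasLeftCalculusOfFractions_multiplicativeClosure
    (hW₁ : ∀ ⦃X' X Y : C'⦄ (s : X' ⟶ X), W s → ∀ f : X' ⟶ Y,
      ∃ (Y' : C') (t : Y ⟶ Y') (g : X ⟶ Y'), W t ∧ f ≫ t = s ≫ g)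
    (hW₂ : ∀ ⦃X' X Y : C'⦄ (f₁ f₂ : X ⟶ Y) (s : X' ⟶ X), W s → s ≫ f₁ = s ≫ f₂ →
      ∃ (Y' : C') (t : Y ⟶ Y'), W t ∧ f₁ ≫ t = f₂ ≫ t) :
    W.multiplicativeClosure.HasLeftCalculusOfFractions where
  exists_leftFraction _ _ φ := by
    obtain ⟨Y', t, g, ht, h⟩ := W.multiplicativeClosure_exists_leftFraction hW₁ φ.hs φ.f
    exact ⟨⟨g, t, ht⟩, h⟩
  ext _ _ _ f₁ f₂ _ hs h := by
    obtain ⟨Y', t, ht, h'⟩ := W.multiplicativeClosure_ext hW₂ hs f₁ f₂ h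
    exact ⟨Y', t, ht, h'⟩

end CategoryTheory.MorphismProperty

lemma CategoryTheory.Functor.IsLocalization.multiplicativeClosure {C' E' : Type*} [Category C']
    [Category E'] (L : C' ⥤ E') (W : MorphismProperty C') [L.IsLocalization W] :
    L.IsLocalization W.multiplicativeClosure := by
  have : (𝟭 C').IsLocalization ⊥ := .for_id _ bot_le
  have hW : W.multiplicativeClosure.IsInvertedBy (𝟭 C' ⋙ L) := by
    rw [MorphismProperty.IsInvertedBy.iff_le_inverseImage_isomorphisms,
      MorphismProperty.multiplicativeClosure_le_iff]
    exact Localization.inverts L W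
  have := Functor.IsLocalization.comp (𝟭 C') L ⊥ W W.multiplicativeClosure hW bot_le
    fun _ _ f hf => ⟨_, _, f, .of f hf, ⟨Iso.refl _⟩⟩
  exact .of_iso _ L.leftUnitor

namespace CategoryTheory.ObjectProperty

variable (P : ObjectProperty C)

lemma trW_exists_leftFraction ⦃X' X Y : C⦄ (s : X' ⟶ X) (hs : P.trW s) (f : X' ⟶ Y) :
    ∃ (Y' : C) (t : Y ⟶ Y') (g : X ⟶ Y'), P.trW t ∧ f ≫ t = s ≫ g := by
  obtain ⟨Z, g, h, hT, hZ⟩ := hs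
  obtain ⟨Y', t, k, hT'⟩ := distinguished_cocone_triangle₂ (h ≫ f⟦(1 : ℤ)⟧')
  obtain ⟨b, hb, -⟩ := complete_distinguished_triangle_morphism₂ _ _ hT hT' f (𝟙 Z)
    (id_comp _).symm
  exact ⟨Y', t, b, ⟨Z, k, _, hT', hZ⟩, hb.symm⟩

lemma trW_ext [P.IsStableUnderShift ℤ] ⦃X' X Y : C⦄ (f₁ f₂ : X ⟶ Y) (s : X' ⟶ X)
    (hs : P.trW s) (h : s ≫ f₁ = s ≫ f₂) :
    ∃ (Y' : C) (t : Y ⟶ Y'), P.trW t ∧ f₁ ≫ t = f₂ ≫ t := by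
  obtain ⟨Z, g, k, hT, hZ⟩ := hs
  obtain ⟨q, hq⟩ : ∃ q : Z ⟶ Y, f₁ - f₂ = g ≫ q :=
    Triangle.yoneda_exact₂ _ hT (f₁ - f₂)
      (show s ≫ (f₁ - f₂) = 0 by rw [Preadditive.comp_sub, h, sub_self])
  obtain ⟨Y', t, r, hT'⟩ := distinguished_cocone_triangle q
  have hqt : q ≫ t = 0 := comp_distTriang_mor_zero₁₂ _ hT'
  refine ⟨Y', t, ⟨_, _, _, rot_of_distTriang _ hT', P.le_shift 1 _ hZ⟩, ?_⟩
  rw [← sub_eq_zero, ← Preadditive.sub_comp, hq, assoc, hqt, comp_zero]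

-- `P.trW` itself is multiplicative only when `C` satisfies the octahedral axiom.
instance [P.IsStableUnderShift ℤ] : P.trW.multiplicativeClosure.HasLeftCalculusOfFractions :=
  P.trW.hasLeftCalculusOfFractions_multiplicativeClosure P.trW_exists_leftFraction P.trW_ext

def factorsThrough : MorphismProperty C :=
  fun X Y f => ∃ (Z : C) (u : X ⟶ Z) (v : Z ⟶ Y), P Z ∧ u ≫ v = f

variable {P}

lemma factorsThrough.add [P.IsTriangulated] [P.IsClosedUnderIsomorphisms] {X Y : C}
    {f g : X ⟶ Y} (hf : P.factorsThrough f) (hg : P.factorsThrough g) :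
    P.factorsThrough (f + g) := by
  obtain ⟨Z₁, u₁, v₁, hZ₁, rfl⟩ := hf
  obtain ⟨Z₂, u₂, v₂, hZ₂, rfl⟩ := hg
  exact ⟨Z₁ ⊞ Z₂, biprod.lift u₁ u₂, biprod.desc v₁ v₂,
    P.ext_of_isTriangulatedClosed₂ _ (binaryBiproductTriangle_distinguished Z₁ Z₂) hZ₁ hZ₂,
    biprod.lift_desc⟩

lemma factorsThrough_of_comp_eq_zero [P.IsStableUnderShift ℤ] {X Y Y' : C} {t : Y ⟶ Y'}
    (ht : P.trW t) {f : X ⟶ Y} (h : f ≫ t = 0) : P.factorsThrough f := by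
  obtain ⟨K, k, q, hT, hK⟩ := (P.trW_iff' t).1 ht
  obtain ⟨g, rfl⟩ := Triangle.coyoneda_exact₂ _ hT f h
  exact ⟨K, g, k, hK, rfl⟩

lemma factorsThrough_of_comp_trW [P.IsTriangulated] [P.IsClosedUnderIsomorphisms]
    {X Y Y' : C} {t : Y ⟶ Y'} (ht : P.trW t) {f : X ⟶ Y} (hft : P.factorsThrough (f ≫ t)) :
    P.factorsThrough f := by
  obtain ⟨K, k, q, hT, hK⟩ := (P.trW_iff' t).1 ht
  obtain ⟨A, u, v, hA, huv⟩ := hft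
  obtain ⟨B, hB, a, c, hT'⟩ := P.distinguished_cocone_triangle₁ (v ≫ q) hA (P.le_shift 1 _ hK)
  have htq : t ≫ q = 0 := comp_distTriang_mor_zero₂₃ _ hT
  have havq : a ≫ v ≫ q = 0 := comp_distTriang_mor_zero₁₂ _ hT'
  obtain ⟨w, rfl⟩ : ∃ w : X ⟶ B, u = w ≫ a := Triangle.coyoneda_exact₂ _ hT' u
    (show u ≫ v ≫ q = 0 by rw [← assoc, huv, assoc, htq, comp_zero])
  obtain ⟨h, hh⟩ : ∃ h : B ⟶ Y, a ≫ v = h ≫ t := Triangle.coyoneda_exact₃ _ hT (a ≫ v)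
    (show (a ≫ v) ≫ q = 0 by rw [assoc, havq])
  have hf : (f - w ≫ h) ≫ t = 0 := by
    rw [Preadditive.sub_comp, assoc, ← hh, ← assoc, huv, sub_self]
  simpa using (factorsThrough_of_comp_eq_zero ht hf).add ⟨B, w, h, hB, rfl⟩

lemma factorsThrough_of_comp_multiplicativeClosure [P.IsTriangulated]
    [P.IsClosedUnderIsomorphisms] {Y Y' : C} {t : Y ⟶ Y'} (ht : P.trW.multiplicativeClosure t)
    {X : C} {f : X ⟶ Y} (hft : P.factorsThrough (f ≫ t)) : P.factorsThrough f := by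
  induction ht with
  | of t ht => exact factorsThrough_of_comp_trW ht hft
  | id Y => simpa using hft
  | comp_of t₁ t₂ _ ht₂ ih => exact ih (factorsThrough_of_comp_trW ht₂ (by simpa using hft))

open ZeroObject in
lemma factorsThrough_sub_of_map_eq [P.IsTriangulated] [P.IsClosedUnderIsomorphisms]
    {E' : Type*} [Category E'] (L : C ⥤ E') [L.IsLocalization P.trW] {X Y : C} {f g : X ⟶ Y}
    (h : L.map f = L.map g) : P.factorsThrough (f - g) := by
  have := Functor.IsLocalization.multiplicativeClosure L P.trW
  obtain ⟨Y', t, ht, hfg⟩ :=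
    (MorphismProperty.map_eq_iff_postcomp L P.trW.multiplicativeClosure f g).1 h
  refine factorsThrough_of_comp_multiplicativeClosure ht ?_
  rw [Preadditive.sub_comp, hfg, sub_self]
  exact ⟨0, 0, 0, P.prop_zero, comp_zero⟩

end CategoryTheory.ObjectProperty

lemma coneInImage_eq_trW_essImage {C₀ : Type*} [Category C₀] (F : C₀ ⥤ C) :
    coneInImage F = F.essImage.trW := by
  rw [← Functor.isoClosure_eq_essImage, ObjectProperty.trW_isoClosure]
  ext X Y f
  constructor
  · rintro ⟨Z, g, h, hT⟩
    exact ⟨_, g, h, hT, Z, rfl⟩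
  · rintro ⟨_, g, h, hT, Z, rfl⟩
    exact ⟨Z, g, h, hT⟩

namespace WeightStructure

variable (w : WeightStructure C)

def Orthogonal (w₁ w₂ : WeightStructure C) : Prop :=
  ∀ ⦃X L : C⦄, w₁.GE X → w₂.LE L → ∀ f : X ⟶ L⟦(1 : ℤ)⟧, f = 0

lemma LE_of_orthogonal {X : C} (h : ∀ ⦃G : C⦄, w.GE G → ∀ f : G ⟶ X⟦(1 : ℤ)⟧, f = 0) :
    w.LE X := by
  obtain ⟨A, B, hA, hB, a, p, q, hT⟩ := w.weight_decomposition X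
  have : Mono a := Triangle.mono₁ _ hT (h hB q)
  have := isSplitMono_of_mono a
  exact w.LE_retract a (retraction a) (IsSplitMono.id a) hA

lemma GE_of_orthogonal {X : C} (h : ∀ ⦃L : C⦄, w.LE L → ∀ f : X ⟶ L⟦(1 : ℤ)⟧, f = 0) :
    w.GE X := by
  obtain ⟨A, B, hA, hB, a, p, q, hT⟩ := w.weight_decomposition (X⟦(-1 : ℤ)⟧)
  let e := shiftNegShift X (1 : ℤ)
  have ha : a = 0 := by
    rw [← (shiftFunctor C (1 : ℤ)).map_eq_zero_iff, ← Preadditive.IsIso.comp_left_eq_zero e.inv]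
    exact h hA _
  have : Epi q := Triangle.epi₃ _ hT ha
  have := isSplitEpi_of_epi q
  exact w.GE_retract (e.inv ≫ section_ q) (q ≫ e.hom) (by simp) hB

lemma GE_of_GE_of_orthogonal {w₁ w₂ : WeightStructure C} (h : w₁.Orthogonal w₂) {X : C}
    (hX : w₁.GE X) : w₂.GE X :=
  w₂.GE_of_orthogonal fun _ hL f => h hX hL f

lemma LE_of_LE_of_orthogonal {w₁ w₂ : WeightStructure C} (h : w₁.Orthogonal w₂) {X : C}
    (hX : w₂.LE X) : w₁.LE X :=
  w₁.LE_of_orthogonal fun _ hG f => h hG hX f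

lemma eq_of_orthogonal {w₁ w₂ : WeightStructure C} (h₁₂ : w₁.Orthogonal w₂)
    (h₂₁ : w₂.Orthogonal w₁) : w₁ = w₂ := by
  have hLE : w₁.LE = w₂.LE := funext fun X => propext
    ⟨LE_of_LE_of_orthogonal h₂₁, LE_of_LE_of_orthogonal h₁₂⟩
  have hGE : w₁.GE = w₂.GE := funext fun X => propext
    ⟨GE_of_GE_of_orthogonal h₁₂, GE_of_GE_of_orthogonal h₂₁⟩
  cases w₁
  cases w₂
  subst hLE hGE
  rfl

section

variable (i : D ⥤ C) [i.CommShift ℤ] [i.IsTriangulated] (wD : WeightStructure D)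

lemma eq_zero_of_factorsThrough_essImage (w₁ w₂ : WeightStructure C)
    (hi₁L : ∀ X : D, wD.LE X → w₁.LE (i.obj X)) (hi₂G : ∀ X : D, wD.GE X → w₂.GE (i.obj X))
    {X L : C} (hX : w₁.GE X) (hL : w₂.LE L) {f : X ⟶ L⟦(1 : ℤ)⟧}
    (hf : i.essImage.factorsThrough f) : f = 0 := by
  obtain ⟨Y, u, v, ⟨Z, ⟨e⟩⟩, rfl⟩ := hf
  obtain ⟨A, B, hA, hB, a, p, q, hT⟩ := wD.weight_decomposition (Z⟦(-1 : ℤ)⟧)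
  let T := i.mapTriangle.obj (Triangle.mk a p q).rotate
  have hT' : T ∈ distTriang C := i.map_distinguished _ (rot_of_distTriang _ hT)
  let κ : T.obj₃ ≅ Y := i.mapIso (shiftNegShift Z (1 : ℤ)) ≪≫ e
  obtain ⟨g, hg⟩ := Triangle.coyoneda_exact₃ _ hT' (u ≫ κ.inv)
    (w₁.orthogonality _ hX (hi₁L A hA))
  have hv : T.mor₂ ≫ κ.hom ≫ v = 0 := w₂.orthogonality _ (hi₂G B hB) hL
  rw [← κ.inv_hom_id_assoc v, ← assoc, hg, assoc, hv, comp_zero]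

lemma orthogonal_of_weightExact [i.Full] (j : C ⥤ E) [j.CommShift ℤ] [j.IsTriangulated]
    [j.IsLocalization (coneInImage i)] (wE : WeightStructure E) (w₁ w₂ : WeightStructure C)
    (hi₁L : ∀ X : D, wD.LE X → w₁.LE (i.obj X)) (hi₂G : ∀ X : D, wD.GE X → w₂.GE (i.obj X))
    (hj₁G : ∀ X : C, w₁.GE X → wE.GE (j.obj X)) (hj₂L : ∀ X : C, w₂.LE X → wE.LE (j.obj X)) :
    w₁.Orthogonal w₂ := by
  intro X L hX hL f
  have : j.IsLocalization i.essImage.trW := coneInImage_eq_trW_essImage i ▸ inferInstance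
  have hjf : j.map f = j.map 0 := by
    rw [j.map_zero, ← cancel_mono ((j.commShiftIso (1 : ℤ)).hom.app L), zero_comp]
    exact wE.orthogonality _ (hj₁G X hX) (hj₂L L hL)
  have hf := ObjectProperty.factorsThrough_sub_of_map_eq (P := i.essImage) j hjf
  rw [sub_zero] at hf
  exact eq_zero_of_factorsThrough_essImage i wD w₁ w₂ hi₁L hi₂G hX hL hf

end

end WeightStructure

theorem glued_weight_structure_unique_general
    (i : D ⥤ C) [i.Full] [i.CommShift ℤ] [i.IsTriangulated]
    (j : C ⥤ E) [j.CommShift ℤ] [j.IsTriangulated] [j.IsLocalization (coneInImage i)]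
    (wD : WeightStructure D) (wE : WeightStructure E)
    (w₁ w₂ : WeightStructure C)
    (hi₁L : ∀ X : D, wD.LE X → w₁.LE (i.obj X)) (hi₁G : ∀ X : D, wD.GE X → w₁.GE (i.obj X))
    (hj₁L : ∀ X : C, w₁.LE X → wE.LE (j.obj X)) (hj₁G : ∀ X : C, w₁.GE X → wE.GE (j.obj X))
    (hi₂L : ∀ X : D, wD.LE X → w₂.LE (i.obj X)) (hi₂G : ∀ X : D, wD.GE X → w₂.GE (i.obj X))
    (hj₂L : ∀ X : C, w₂.LE X → wE.LE (j.obj X)) (hj₂G : ∀ X : C, w₂.GE X → wE.GE (j.obj X)) :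
    w₁ = w₂ :=
  WeightStructure.eq_of_orthogonal
    (WeightStructure.orthogonal_of_weightExact i wD j wE w₁ w₂ hi₁L hi₂G hj₁G hj₂L)
    (WeightStructure.orthogonal_of_weightExact i wD j wE w₂ w₁ hi₂L hi₁G hj₂G hj₁L)

/-- let `D →^{i} C →^{j} E` be a short exact sequence of triangulated
categories (`i` a full embedding, `j` the Verdier localization of `C` by the image of `i`,
i.e. the localization at the class of morphisms whose cone lies in the image of `i`), and
let `wD`, `wE` be weight structures on `D` and `E`. Then there is at most one weight
structure on `C` making both `i` and `j` weight-exact. -/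
theorem glued_weight_structure_unique
    (i : D ⥤ C) [i.Full] [i.Faithful] [i.CommShift ℤ] [i.IsTriangulated]
    (j : C ⥤ E) [j.CommShift ℤ] [j.IsTriangulated] [j.IsLocalization (coneInImage i)]
    (wD : WeightStructure D) (wE : WeightStructure E)
    (w₁ w₂ : WeightStructure C)
    (hi₁L : ∀ X : D, wD.LE X → w₁.LE (i.obj X)) (hi₁G : ∀ X : D, wD.GE X → w₁.GE (i.obj X))
    (hj₁L : ∀ X : C, w₁.LE X → wE.LE (j.obj X)) (hj₁G : ∀ X : C, w₁.GE X → wE.GE (j.obj X))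
    (hi₂L : ∀ X : D, wD.LE X → w₂.LE (i.obj X)) (hi₂G : ∀ X : D, wD.GE X → w₂.GE (i.obj X))
    (hj₂L : ∀ X : C, w₂.LE X → wE.LE (j.obj X)) (hj₂G : ∀ X : C, w₂.GE X → wE.GE (j.obj X)) :
    w₁ = w₂ :=
  glued_weight_structure_unique_general i j wD wE w₁ w₂ hi₁L hi₁G hj₁L hj₁G hi₂L hi₂G hj₂L hj₂G
end
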